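/- Let G be a nilpotent group of nilpotency class k, let n be a positive integer, and let G^(n^k) denote the subgroup of G generated by all elements g^(n^k) with g ∈ G. Then for every h ∈ G^(n^k), the equation x^n = h has a solution in G. -/

import Mathlib

/-!
Give the elements of `γ i` (the lower central series, `γ 0 = G`) weight `i` and let each `n`-th
power add one to the weight: `Φ w q` is generated by the `u ^ n ^ (w - i)` with `u ∈ γ i`, `i ≥ q`.
Commutators add weights, `⁅Φ w q, Φ w' r⁆ ≤ Φ (w + w' + 1) (q + r + 1)`, and `n`-th powers map
`Φ w q` into `Φ (w + 1) q`; both are proved together by induction on `q + r`, downwards from the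
class `k`, where `γ k = 1`.

Every `n ^ k`-th power lies in `Φ k 0`. Modulo `Φ k (m + 1)` the subgroup `Φ (k - 1) m` is central
and `Φ k m` consists of `n`-th powers of its elements, so `x ^ n * h` with `h ∈ Φ k m` is congruent
to some `(x * c) ^ n`; iterating this reaches `Φ k k = 1`.
-/

open Subgroup
open scoped commutatorElement

section GroupTheory

variable {G : Type*} [Group G]

namespace QuotientGroup

variable {N : Subgroup G} [N.Normal]

theorem mk_commutatorElement (a b : G) :
    ((⁅a, b⁆ : G) : G ⧸ N) = ⁅(a : G ⧸ N), (b : G ⧸ N)⁆ :=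
  map_commutatorElement (mk' N) a b

theorem commute_mk_of_commutatorElement_mem {a b : G} (h : ⁅a, b⁆ ∈ N) :
    Commute (a : G ⧸ N) b := by
  rw [← commutatorElement_eq_one_iff_commute, ← mk_commutatorElement, eq_one_iff]
  exact h

theorem exists_mk_pow_eq_of_mem_closure {H : Subgroup G} (hH : ⁅H, H⁆ ≤ N) {n : ℕ} {S : Set G}
    (hS : ∀ s ∈ S, ∃ c ∈ H, (c : G ⧸ N) ^ n = s) {h : G} (hh : h ∈ closure S) :
    ∃ c ∈ H, (c : G ⧸ N) ^ n = h := by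
  induction hh using closure_induction with
  | mem s hs => exact hS s hs
  | one => exact ⟨1, one_mem H, by simp⟩
  | mul a b _ _ ha hb =>
    obtain ⟨c, hc, hca⟩ := ha
    obtain ⟨d, hd, hdb⟩ := hb
    have hcd : Commute (c : G ⧸ N) d :=
      commute_mk_of_commutatorElement_mem (hH (commutator_mem_commutator hc hd))
    exact ⟨c * d, mul_mem hc hd, by rw [mk_mul, hcd.mul_pow, hca, hdb, mk_mul]⟩
  | inv a _ ha =>
    obtain ⟨c, hc, hca⟩ := ha
    exact ⟨c⁻¹, inv_mem hc, by rw [mk_inv, inv_pow, hca, mk_inv]⟩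

end QuotientGroup

namespace Subgroup

theorem mem_of_mk_eq {N M : Subgroup G} [N.Normal] (hNM : N ≤ M) {a b : G}
    (hab : (a : G ⧸ N) = b) (ha : a ∈ M) : b ∈ M := by
  simpa using mul_mem ha (hNM (QuotientGroup.eq.mp hab))

theorem commutator_commutator_le_of_rotate {H₁ H₂ H₃ N : Subgroup G} [N.Normal]
    (h₁ : ⁅⁅H₂, H₃⁆, H₁⁆ ≤ N) (h₂ : ⁅⁅H₃, H₁⁆, H₂⁆ ≤ N) : ⁅⁅H₁, H₂⁆, H₃⁆ ≤ N := by
  simp only [← QuotientGroup.ker_mk' N, ← map_eq_bot_iff, map_commutator] at h₁ h₂ ⊢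
  exact commutator_commutator_eq_bot_of_rotate h₁ h₂

theorem commutator_closure_closure_le {S T : Set G} {N : Subgroup G} [N.Normal]
    (h : ∀ s ∈ S, ∀ t ∈ T, ⁅s, t⁆ ∈ N) : ⁅closure S, closure T⁆ ≤ N := by
  rw [← QuotientGroup.ker_mk' N, ← map_eq_bot_iff, map_commutator, MonoidHom.map_closure,
    MonoidHom.map_closure, commutator_eq_bot_iff_le_centralizer, centralizer_closure, closure_le]
  rintro _ ⟨s, hs, rfl⟩ _ ⟨t, ht, rfl⟩
  exact (QuotientGroup.commute_mk_of_commutatorElement_mem (h s hs t ht)).eq.symm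

local notation "γ" => Subgroup.lowerCentralSeries (⊤ : Subgroup G)

theorem commutator_lowerCentralSeries_le (i j : ℕ) : ⁅γ i, γ j⁆ ≤ γ (i + j + 1) := by
  induction j generalizing i with
  | zero => rfl
  | succ j ih =>
    rw [lowerCentralSeries_succ, commutator_comm]
    apply commutator_commutator_le_of_rotate
    · rw [commutator_comm ⊤, ← lowerCentralSeries_succ]
      refine (ih (i + 1)).trans (lowerCentralSeries_antitone _ ?_)
      omega
    · exact commutator_mono (ih i) le_rfl

end Subgroup

theorem Commute.commutatorElement_pow_left {x a : G} (h : Commute ⁅x, a⁆ x) (m : ℕ) :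
    ⁅x ^ m, a⁆ = ⁅x, a⁆ ^ m := by
  induction m with
  | zero => simp
  | succ m ih =>
    have hsucc : ⁅x ^ (m + 1), a⁆ = x * ⁅x ^ m, a⁆ * x⁻¹ * ⁅x, a⁆ := by
      simp only [commutatorElement_def, pow_succ']
      group
    rw [hsucc, ih, ← (h.pow_left m).eq, pow_succ]
    group

end GroupTheory

/-- The `Φ w q` above. For `i ≥ w` the truncated exponent `w - i` is `0`, so it contains `γ i`
for every `i ≥ max w q`. -/
def powerFiltration (G : Type*) [Group G] (n w q : ℕ) : Subgroup G :=
  closure {x | ∃ i, q ≤ i ∧ ∃ u ∈ (⊤ : Subgroup G).lowerCentralSeries i, x = u ^ n ^ (w - i)}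

section PowerFiltration

variable {G : Type*} [Group G] {n : ℕ}

local notation "γ" => Subgroup.lowerCentralSeries (⊤ : Subgroup G)
local notation "Φ" => powerFiltration G n

theorem pow_mem_powerFiltration {w q i E : ℕ} {u : G} (hu : u ∈ γ i) (hq : q ≤ i)
    (hE : w - i ≤ E) : u ^ n ^ E ∈ Φ w q := by
  have hgen : u ^ n ^ (w - i) ∈ Φ w q := subset_closure ⟨i, hq, u, hu, rfl⟩
  obtain ⟨d, rfl⟩ := Nat.exists_eq_add_of_le hE
  rw [pow_add, pow_mul]
  exact pow_mem hgen _

theorem mem_powerFiltration_of_mem_lowerCentralSeries {w q i : ℕ} {u : G} (hu : u ∈ γ i)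
    (hq : q ≤ i) (hw : w ≤ i) : u ∈ Φ w q := by
  simpa using pow_mem_powerFiltration (n := n) (E := 0) hu hq (by omega)

instance powerFiltration_normal (w q : ℕ) : (Φ w q).Normal := by
  rw [← normalizer_eq_top_iff, eq_top_iff, powerFiltration, le_normalizer_closure_iff]
  rintro g - _ ⟨i, hq, u, hu, rfl⟩
  rw [← conj_pow]
  exact pow_mem_powerFiltration ((lowerCentralSeries_normal ⊤ i).conj_mem u hu g) hq le_rfl

theorem powerFiltration_mono {w q w' q' : ℕ} (hw : w' ≤ w) (hq : q' ≤ q) : Φ w q ≤ Φ w' q' := by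
  rw [powerFiltration, closure_le]
  rintro _ ⟨i, hqi, u, hu, rfl⟩
  exact pow_mem_powerFiltration hu (hq.trans hqi) (by omega)

theorem powerFiltration_le_lowerCentralSeries (w q : ℕ) : Φ w q ≤ γ q := by
  rw [powerFiltration, closure_le]
  rintro _ ⟨i, hqi, u, hu, rfl⟩
  exact pow_mem ((⊤ : Subgroup G).lowerCentralSeries_antitone hqi hu) _

theorem powerFiltration_zero_zero : Φ 0 0 = ⊤ :=
  eq_top_iff.mpr fun g _ ↦
    mem_powerFiltration_of_mem_lowerCentralSeries (i := 0) (mem_top g) le_rfl le_rfl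

theorem pow_mem_powerFiltration_succ {w q : ℕ} (hcomm : ⁅Φ w q, Φ w q⁆ ≤ Φ (w + 1) q) {φ : G}
    (hφ : φ ∈ Φ w q) : φ ^ n ∈ Φ (w + 1) q := by
  induction hφ using closure_induction with
  | mem _ hx =>
    obtain ⟨i, hq, u, hu, rfl⟩ := hx
    rw [← pow_mul, ← pow_succ]
    exact pow_mem_powerFiltration hu hq (by omega)
  | one => simp
  | mul a b ha hb hpa hpb =>
    have hab : Commute (a : G ⧸ Φ (w + 1) q) b :=
      QuotientGroup.commute_mk_of_commutatorElement_mem (hcomm (commutator_mem_commutator ha hb))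
    refine mem_of_mk_eq le_rfl ?_ (mul_mem hpa hpb)
    simp only [QuotientGroup.mk_mul, QuotientGroup.mk_pow, hab.mul_pow]
  | inv a _ hpa => simpa only [inv_pow] using inv_mem hpa

theorem commutatorElement_pow_left_mem_powerFiltration {w s : ℕ}
    (hpow : ∀ φ ∈ Φ w s, φ ^ n ∈ Φ (w + 1) s) (hcomm : ⁅Φ w s, ⊤⁆ ≤ Φ (w + 1) (s + 1))
    {x a : G} (hxa : ⁅x, a⁆ ∈ Φ w s) : ⁅x ^ n, a⁆ ∈ Φ (w + 1) s := by
  have hx : Commute ((⁅x, a⁆ : G) : G ⧸ Φ (w + 1) (s + 1)) x :=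
    QuotientGroup.commute_mk_of_commutatorElement_mem
      (hcomm (commutator_mem_commutator hxa (mem_top x)))
  refine mem_of_mk_eq (powerFiltration_mono le_rfl (Nat.le_succ s)) ?_ (hpow _ hxa)
  rw [QuotientGroup.mk_commutatorElement] at hx ⊢
  rw [QuotientGroup.mk_pow, QuotientGroup.mk_commutatorElement, QuotientGroup.mk_pow,
    hx.commutatorElement_pow_left]

theorem commutatorElement_pow_pow_left_mem_powerFiltration {s : ℕ}
    (hpow : ∀ w, ∀ φ ∈ Φ w s, φ ^ n ∈ Φ (w + 1) s)
    (hcomm : ∀ w, ⁅Φ w s, ⊤⁆ ≤ Φ (w + 1) (s + 1))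
    {w : ℕ} {x a : G} (hxa : ⁅x, a⁆ ∈ Φ w s) (E : ℕ) : ⁅x ^ n ^ E, a⁆ ∈ Φ (w + E) s := by
  induction E with
  | zero => simpa using hxa
  | succ E ih =>
    rw [pow_succ, pow_mul]
    exact commutatorElement_pow_left_mem_powerFiltration (hpow _) (hcomm _) ih

theorem commutatorElement_pow_pow_mem_of_mem_lowerCentralSeries {i j : ℕ}
    (hpow : ∀ w, ∀ φ ∈ Φ w (i + j + 1), φ ^ n ∈ Φ (w + 1) (i + j + 1))
    (hcomm : ∀ w, ⁅Φ w (i + j + 1), ⊤⁆ ≤ Φ (w + 1) (i + j + 1 + 1))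
    {u v : G} (hu : u ∈ γ i) (hv : v ∈ γ j) (E F : ℕ) :
    ⁅u ^ n ^ E, v ^ n ^ F⁆ ∈ Φ (i + j + 1 + F + E) (i + j + 1) := by
  have hvu : ⁅v, u⁆ ∈ Φ (i + j + 1) (i + j + 1) := by
    rw [← commutatorElement_inv]
    exact inv_mem (mem_powerFiltration_of_mem_lowerCentralSeries
      (commutator_lowerCentralSeries_le i j (commutator_mem_commutator hu hv)) le_rfl le_rfl)
  have hvFu := commutatorElement_pow_pow_left_mem_powerFiltration hpow hcomm hvu F
  rw [← commutatorElement_inv] at hvFu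
  exact commutatorElement_pow_pow_left_mem_powerFiltration hpow hcomm (inv_mem_iff.mp hvFu) E

theorem commutator_powerFiltration_le_of_forall_lt {q r : ℕ}
    (h : ∀ q' r', q + r < q' + r' → ∀ w w', ⁅Φ w q', Φ w' r'⁆ ≤ Φ (w + w' + 1) (q' + r' + 1))
    (w w' : ℕ) : ⁅Φ w q, Φ w' r⁆ ≤ Φ (w + w' + 1) (q + r + 1) := by
  apply commutator_closure_closure_le
  rintro _ ⟨i, hqi, u, hu, rfl⟩ _ ⟨j, hrj, v, hv, rfl⟩
  have hpow : ∀ w, ∀ φ ∈ Φ w (i + j + 1), φ ^ n ∈ Φ (w + 1) (i + j + 1) := fun w φ hφ ↦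
    pow_mem_powerFiltration_succ
      ((h _ _ (by omega) w w).trans (powerFiltration_mono (by omega) (by omega))) hφ
  have hcomm : ∀ w, ⁅Φ w (i + j + 1), ⊤⁆ ≤ Φ (w + 1) (i + j + 1 + 1) := fun w ↦ by
    simpa [powerFiltration_zero_zero] using h (i + j + 1) 0 (by omega) w 0
  exact powerFiltration_mono (by omega) (by omega)
    (commutatorElement_pow_pow_mem_of_mem_lowerCentralSeries hpow hcomm hu hv _ _)

theorem commutator_powerFiltration_le {k : ℕ} (hk : γ k = ⊥) (q r w w' : ℕ) :
    ⁅Φ w q, Φ w' r⁆ ≤ Φ (w + w' + 1) (q + r + 1) := by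
  by_cases hqr : k ≤ q + r
  · calc ⁅Φ w q, Φ w' r⁆
        ≤ ⁅γ q, γ r⁆ := commutator_mono (powerFiltration_le_lowerCentralSeries w q)
          (powerFiltration_le_lowerCentralSeries w' r)
      _ ≤ γ k := (commutator_lowerCentralSeries_le q r).trans
          ((⊤ : Subgroup G).lowerCentralSeries_antitone (by omega))
      _ ≤ _ := hk ▸ bot_le
  · exact commutator_powerFiltration_le_of_forall_lt
      (fun q' r' _ w w' ↦ commutator_powerFiltration_le hk q' r' w w') w w'
termination_by k - (q + r)

theorem exists_mem_powerFiltration_mk_pow_eq {w m : ℕ} (hm : m ≤ w)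
    (hcomm : ⁅Φ w m, ⊤⁆ ≤ Φ (w + 1) (m + 1)) {h : G} (hh : h ∈ Φ (w + 1) m) :
    ∃ c ∈ Φ w m, (c : G ⧸ Φ (w + 1) (m + 1)) ^ n = h := by
  refine QuotientGroup.exists_mk_pow_eq_of_mem_closure
    ((commutator_mono le_rfl le_top).trans hcomm) ?_ hh
  rintro _ ⟨i, hmi, u, hu, rfl⟩
  rcases hmi.eq_or_lt with rfl | hlt
  · refine ⟨u ^ n ^ (w - m), pow_mem_powerFiltration hu le_rfl le_rfl, ?_⟩
    rw [← QuotientGroup.mk_pow, ← pow_mul, ← pow_succ, Nat.sub_add_comm hm]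
  · refine ⟨1, one_mem _, ?_⟩
    rw [QuotientGroup.mk_one, one_pow, eq_comm, QuotientGroup.eq_one_iff]
    exact pow_mem_powerFiltration hu hlt le_rfl

theorem exists_pow_eq_pow_mul {k : ℕ} (hk : γ k = ⊥) (m : ℕ) (x h : G) (hh : h ∈ Φ k m) :
    ∃ y : G, y ^ n = x ^ n * h := by
  by_cases hkm : k ≤ m
  · have h1 : h = 1 := by
      rw [← mem_bot, ← hk]
      exact (⊤ : Subgroup G).lowerCentralSeries_antitone hkm
        (powerFiltration_le_lowerCentralSeries k m hh)
    exact ⟨x, by rw [h1, mul_one]⟩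
  obtain ⟨w, rfl⟩ : ∃ w, k = w + 1 := ⟨k - 1, by omega⟩
  have hcomm : ⁅Φ w m, ⊤⁆ ≤ Φ (w + 1) (m + 1) := by
    simpa [powerFiltration_zero_zero] using commutator_powerFiltration_le (n := n) hk m 0 w 0
  obtain ⟨c, hc, hch⟩ := exists_mem_powerFiltration_mk_pow_eq (by omega) hcomm hh
  have hxc : Commute (x : G ⧸ Φ (w + 1) (m + 1)) c :=
    (QuotientGroup.commute_mk_of_commutatorElement_mem
      (hcomm (commutator_mem_commutator hc (mem_top x)))).symm
  have hroot : (((x * c) ^ n : G) : G ⧸ Φ (w + 1) (m + 1)) = (x ^ n * h : G) := by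
    rw [QuotientGroup.mk_pow, QuotientGroup.mk_mul, hxc.mul_pow, hch, QuotientGroup.mk_mul,
      QuotientGroup.mk_pow]
  obtain ⟨y, hy⟩ := exists_pow_eq_pow_mul hk (m + 1) (x * c) _ (QuotientGroup.eq.mp hroot)
  exact ⟨y, by rw [hy, mul_inv_cancel_left]⟩
termination_by k - m

end PowerFiltration

theorem root_exists_of_mem_power_subgroup_general (G : Type*) [Group G] [Group.IsNilpotent G]
    (k : ℕ) (hk : Group.nilpotencyClass G = k) (n : ℕ)
    (h : G) (hh : h ∈ Subgroup.closure {x : G | ∃ g : G, x = g ^ (n ^ k)}) :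
    ∃ x : G, x ^ n = h := by
  have hbot : (⊤ : Subgroup G).lowerCentralSeries k = ⊥ :=
    hk ▸ Subgroup.lowerCentralSeries_nilpotencyClass
  have hh' : h ∈ powerFiltration G n k 0 := by
    refine (closure_le _).mpr ?_ hh
    rintro _ ⟨g, rfl⟩
    exact pow_mem_powerFiltration (i := 0) (mem_top g) le_rfl le_rfl
  simpa using exists_pow_eq_pow_mul hbot 0 1 h hh'

theorem root_exists_of_mem_power_subgroup (G : Type*) [Group G] [Group.IsNilpotent G]
    (k : ℕ) (hk : Group.nilpotencyClass G = k) (n : ℕ) (hn : 0 < n)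
    (h : G) (hh : h ∈ Subgroup.closure {x : G | ∃ g : G, x = g ^ (n ^ k)}) :
    ∃ x : G, x ^ n = h :=
  root_exists_of_mem_power_subgroup_general G k hk n h hh
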